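/- arXiv:math/0308262 — 8 statements merged into one kernel-verified Lean document; each statement's English description precedes it below -/
import Mathlib

section
/- For all θ in the open interval (0, π/3), we have π·sin(2θ) + 3√3·θ − 3π·sin(θ) > 0. -/
/-! `g θ = π sin 2θ + 3√3 θ - 3π sin θ` (below: `bubbleGap`) vanishes at `0` and at `π/3`,
and `g'' θ = π sin θ (3 - 8 cos θ)` is negative on `(0, π/3)` because `cos θ > 1/2` there.
So `g` is strictly concave on `[0, π/3]` and hence strictly above the chord joining its two
zeros. -/

open Real Set

noncomputable def bubbleGap (θ : ℝ) : ℝ :=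
  π * sin (2 * θ) + 3 * √3 * θ - 3 * π * sin θ

lemma hasDerivAt_bubbleGap (θ : ℝ) :
    HasDerivAt bubbleGap (2 * π * cos (2 * θ) + 3 * √3 - 3 * π * cos θ) θ := by
  have h2θ : HasDerivAt (fun θ : ℝ => sin (2 * θ)) (cos (2 * θ) * 2) θ :=
    (hasDerivAt_sin (2 * θ)).comp θ ((hasDerivAt_id θ).const_mul 2 |>.congr_deriv (mul_one 2))
  exact (((h2θ.const_mul π).add ((hasDerivAt_id θ).const_mul (3 * √3))).sub
    ((hasDerivAt_sin θ).const_mul (3 * π))).congr_deriv (by ring)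

lemma deriv_bubbleGap :
    deriv bubbleGap = fun θ => 2 * π * cos (2 * θ) + 3 * √3 - 3 * π * cos θ :=
  funext fun θ => (hasDerivAt_bubbleGap θ).deriv

lemma iterate_two_deriv_bubbleGap (θ : ℝ) :
    deriv^[2] bubbleGap θ = π * sin θ * (3 - 8 * cos θ) := by
  have h2θ : HasDerivAt (fun θ : ℝ => cos (2 * θ)) (-sin (2 * θ) * 2) θ :=
    (hasDerivAt_cos (2 * θ)).comp θ ((hasDerivAt_id θ).const_mul 2 |>.congr_deriv (mul_one 2))
  have h := ((h2θ.const_mul (2 * π)).add_const (3 * √3)).sub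
    ((hasDerivAt_cos θ).const_mul (3 * π))
  rw [Function.iterate_succ_apply, Function.iterate_one, deriv_bubbleGap]
  exact h.deriv.trans (by rw [sin_two_mul]; ring)

lemma iterate_two_deriv_bubbleGap_neg {θ : ℝ} (hθ : θ ∈ Ioo 0 (π / 3)) :
    deriv^[2] bubbleGap θ < 0 := by
  obtain ⟨h0, h1⟩ := hθ
  have hsin : 0 < sin θ := sin_pos_of_pos_of_lt_pi h0 (by linarith [pi_pos])
  have hcos : 1 / 2 < cos θ := by
    rw [← cos_pi_div_three]
    exact cos_lt_cos_of_nonneg_of_le_pi h0.le (by linarith [pi_pos]) h1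
  rw [iterate_two_deriv_bubbleGap]
  exact mul_neg_of_pos_of_neg (mul_pos pi_pos hsin) (by linarith)

lemma strictConcaveOn_bubbleGap : StrictConcaveOn ℝ (Icc 0 (π / 3)) bubbleGap := by
  refine strictConcaveOn_of_deriv2_neg (convex_Icc _ _) ?_ fun θ hθ => ?_
  · exact (continuous_iff_continuousAt.2 fun θ =>
      (hasDerivAt_bubbleGap θ).continuousAt).continuousOn
  · rw [interior_Icc] at hθ
    exact iterate_two_deriv_bubbleGap_neg hθ

lemma bubbleGap_zero : bubbleGap 0 = 0 := by
  simp [bubbleGap]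

lemma bubbleGap_pi_div_three : bubbleGap (π / 3) = 0 := by
  have h : 2 * (π / 3) = π - π / 3 := by ring
  rw [bubbleGap, h, sin_pi_sub, sin_pi_div_three]
  ring

theorem stmt0 : ∀ θ ∈ Set.Ioo (0:ℝ) (π/3),
    π * Real.sin (2*θ) + 3 * Real.sqrt 3 * θ - 3 * π * Real.sin θ > 0 := by
  intro θ hθ
  have hπ3 : (0 : ℝ) < π / 3 := by positivity
  have h := strictConcaveOn_bubbleGap.lt_on_openSegment (left_mem_Icc.2 hπ3.le)
    (right_mem_Icc.2 hπ3.le) hπ3.ne (by rwa [openSegment_eq_Ioo hπ3])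
  rwa [bubbleGap_zero, bubbleGap_pi_div_three, min_self] at h
end

section
/- Suppose two closed geodesics on a flat torus (normalized so every closed geodesic has length at least 1) have lengths L₁, L₂ and meet at an angle φ ∈ (0, π/2]. Then L₁ + L₂ ≥ 1 + 2cos(φ). Algebraically: if L₁, L₂ ≥ 1, L₁ + L₂ > 1, and L₁² + L₂² − 2·L₁·L₂·cos(φ) ≥ 1, then L₁ + L₂ ≥ 1 + 2cos(φ). -/
theorem stmt3 (L₁ L₂ φ : ℝ) (hφ : φ ∈ Set.Ioc 0 (Real.pi / 2))
    (h1 : 1 ≤ L₁) (h2 : 1 ≤ L₂) (hsum : 1 < L₁ + L₂)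
    (hgeo : L₁ ^ 2 + L₂ ^ 2 - 2 * L₁ * L₂ * Real.cos φ ≥ 1) :
    L₁ + L₂ ≥ 1 + 2 * Real.cos φ := by
  nlinarith [mul_nonneg (sub_nonneg.2 h1) (sub_nonneg.2 h2), Real.cos_le_one φ,
    mul_pos (sub_pos.2 hsum) (sub_pos.2 hsum)]
end

section
/- If L₁, L₂ ∈ [1, 3/2] and φ ∈ (0, π/2] satisfy L₁² + L₂² − 2·L₁·L₂·cos(φ) ≥ 1, then φ ≥ arccos(7/9). -/
theorem stmt4 (L₁ L₂ φ : ℝ) (h1 : L₁ ∈ Set.Icc 1 (3/2 : ℝ))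
    (h2 : L₂ ∈ Set.Icc 1 (3/2 : ℝ)) (hφ : φ ∈ Set.Ioc 0 (Real.pi / 2))
    (hgeo : L₁ ^ 2 + L₂ ^ 2 - 2 * L₁ * L₂ * Real.cos φ ≥ 1) :
    φ ≥ Real.arccos (7/9) := by
  obtain ⟨ha1, hb1⟩ := h1
  obtain ⟨ha2, hb2⟩ := h2
  obtain ⟨hφ0, hφ2⟩ := hφ
  have hc : Real.cos φ ≤ 7/9 := by
    nlinarith [mul_nonneg (sub_nonneg.2 hb1) (sub_nonneg.2 hb2),
      mul_nonneg (sub_nonneg.2 ha1) (sub_nonneg.2 ha2),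
      mul_nonneg (sub_nonneg.2 hb1) (sub_nonneg.2 ha2),
      mul_nonneg (sub_nonneg.2 ha1) (sub_nonneg.2 hb2),
      sq_nonneg (L₁ - L₂), sq_nonneg (L₁ + L₂)]
  have : Real.arccos (7/9) ≤ Real.arccos (Real.cos φ) := by
    unfold Real.arccos
    have := Real.monotone_arcsin hc
    linarith
  rwa [Real.arccos_cos hφ0.le (hφ2.trans (by linarith [Real.pi_pos]))] at this
end

section
/- Let u be a nonzero vector in ℝ² and let v₁, w₁, v₂, w₂ be unit vectors in ℝ² such that v₁ ⊥ w₁, v₂ ⊥ w₂, and the angle between v₁ and v₂ is φ ∈ [π/4, π/2]. Suppose u has nonnegative inner product with v₁, w₁, and v₂. Then u·v₁ + u·w₁ + u·v₂ + |u·w₂| ≤ 2(sin(φ/2) + cos(φ/2))·‖u‖. -/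
/-!
In the orthonormal frame `(v₁, w₁)` write `u = (a, b)` and `v₂ = (c, d)` with `c = cos φ`,
`|d| = sin φ`; in the plane `w₂ = ±(-d, c)`, so `|u·w₂| = |a d - b c|`. Resolving the absolute value,
the left side is `⟪u, X⟫` for `X = (1 + c + d, 1 + d - c)` or `(1 + c - d, 1 + c + d)`, with
`‖X‖² = 4 (1 + d)` or `4 (1 + c)`. Both are at most `4 (1 + sin φ) = (2 (sin (φ/2) + cos (φ/2)))²`
because `cos φ ≤ sin φ` for `φ ≥ π/4`, and Cauchy–Schwarz concludes.
-/

open Real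
open scoped RealInnerProductSpace

theorem eq_rotate_or_eq_neg_rotate {p q p' q' : ℝ} (h : p ^ 2 + q ^ 2 = 1)
    (h' : p' ^ 2 + q' ^ 2 = 1) (h₀ : p * p' + q * q' = 0) :
    (p' = -q ∧ q' = p) ∨ (p' = q ∧ q' = -p) := by
  set s := p * q' - q * p'
  have hs : s ^ 2 = 1 := by
    linear_combination (p' ^ 2 + q' ^ 2) * h + h' - (p * p' + q * q') * h₀
  have hp' : p' = -q * s := by linear_combination p * h₀ - p' * h
  have hq' : q' = p * s := by linear_combination q * h₀ - q' * h
  rcases sq_eq_one_iff.mp hs with hs | hs <;> rw [hs] at hp' hq'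
  · exact Or.inl ⟨by linarith, by linarith⟩
  · exact Or.inr ⟨by linarith, by linarith⟩

section TwoDim

variable {E : Type*} [NormedAddCommGroup E] [InnerProductSpace ℝ E]

theorem orthonormal_pair {v w : E} (hv : ‖v‖ = 1) (hw : ‖w‖ = 1) (hvw : ⟪v, w⟫ = 0) :
    Orthonormal ℝ ![v, w] := by
  rw [orthonormal_iff_ite]
  intro i j
  fin_cases i <;> fin_cases j <;> simp [hv, hw, hvw, real_inner_comm]

theorem Orthonormal.inner_eq_of_finrank_eq_two (hE : Module.finrank ℝ E = 2) {v w : E}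
    (h : Orthonormal ℝ ![v, w]) (x y : E) :
    ⟪x, y⟫ = ⟪x, v⟫ * ⟪v, y⟫ + ⟪x, w⟫ * ⟪w, y⟫ := by
  have hb := coe_basisOfOrthonormalOfCardEqFinrank h (by simp [hE])
  let b := (basisOfOrthonormalOfCardEqFinrank h (by simp [hE])).toOrthonormalBasis (hb ▸ h)
  have hbv : ∀ i, b i = ![v, w] i := fun i => by simp [b, hb]
  simpa [Fin.sum_univ_two, hbv] using (b.sum_inner_mul_inner x y).symm

theorem Orthonormal.norm_sq_eq_of_finrank_eq_two (hE : Module.finrank ℝ E = 2) {v w : E}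
    (h : Orthonormal ℝ ![v, w]) (x : E) : ‖x‖ ^ 2 = ⟪x, v⟫ ^ 2 + ⟪x, w⟫ ^ 2 := by
  rw [← real_inner_self_eq_norm_sq, h.inner_eq_of_finrank_eq_two hE, real_inner_comm v,
    real_inner_comm w]
  ring

theorem abs_inner_eq_abs_of_orthonormal (hE : Module.finrank ℝ E = 2) {v₁ w₁ v₂ w₂ : E}
    (h₁ : Orthonormal ℝ ![v₁, w₁]) (h₂ : Orthonormal ℝ ![v₂, w₂]) (u : E) :
    |⟪u, w₂⟫| = |⟪u, v₁⟫ * ⟪w₁, v₂⟫ - ⟪u, w₁⟫ * ⟪v₁, v₂⟫| := by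
  have hv₂ : ‖v₂‖ = 1 := by simpa using h₂.1 0
  have hw₂ : ‖w₂‖ = 1 := by simpa using h₂.1 1
  have hvw₂ : ⟪v₂, w₂⟫ = 0 := by simpa using h₂.2 (show (0 : Fin 2) ≠ 1 by decide)
  have coords := h₁.inner_eq_of_finrank_eq_two hE
  have hp := h₁.norm_sq_eq_of_finrank_eq_two hE v₂
  have hp' := h₁.norm_sq_eq_of_finrank_eq_two hE w₂
  rw [hv₂, one_pow, real_inner_comm v₁ v₂, real_inner_comm w₁ v₂] at hp
  rw [hw₂, one_pow, real_inner_comm v₁ w₂, real_inner_comm w₁ w₂] at hp'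
  rw [coords v₂ w₂, real_inner_comm v₁ v₂, real_inner_comm w₁ v₂] at hvw₂
  rw [coords u w₂]
  rcases eq_rotate_or_eq_neg_rotate hp.symm hp'.symm hvw₂ with ⟨e₁, e₂⟩ | ⟨e₁, e₂⟩ <;> rw [e₁, e₂]
  · rw [← abs_neg]; ring_nf
  · ring_nf

end TwoDim

theorem mul_add_mul_le_of_sq_add_sq_le {A B a b r K : ℝ} (hr : 0 ≤ r) (hab : a ^ 2 + b ^ 2 = r ^ 2)
    (hK : 0 ≤ K) (hAB : A ^ 2 + B ^ 2 ≤ K ^ 2) : A * a + B * b ≤ K * r := by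
  nlinarith [sq_nonneg (A * b - B * a), sq_nonneg (A * a + B * b + K * r),
    sq_nonneg (A * a + B * b - K * r), mul_nonneg hK hr]

theorem taxicab_le {a b c d r K : ℝ} (hr : 0 ≤ r) (hab : a ^ 2 + b ^ 2 = r ^ 2) (hK : 0 ≤ K)
    (hcd : c ^ 2 + d ^ 2 = 1) (hc : 4 * (1 + c) ≤ K ^ 2) (hd : 4 * (1 + d) ≤ K ^ 2) :
    a + b + (a * c + b * d) + |a * d - b * c| ≤ K * r := by
  rcases abs_cases (a * d - b * c) with ⟨habs, -⟩ | ⟨habs, -⟩ <;> rw [habs]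
  · calc _ = (1 + c + d) * a + (1 + d - c) * b := by ring
      _ ≤ K * r := mul_add_mul_le_of_sq_add_sq_le hr hab hK (by linear_combination hd + 2 * hcd)
  · calc _ = (1 + c - d) * a + (1 + c + d) * b := by ring
      _ ≤ K * r := mul_add_mul_le_of_sq_add_sq_le hr hab hK (by linear_combination hc + 2 * hcd)

theorem Real.cos_le_sin_of_mem_Icc {x : ℝ} (hx : x ∈ Set.Icc (π / 4) (5 * π / 4)) :
    cos x ≤ sin x := by
  have h : 0 ≤ sin (x - π / 4) :=
    sin_nonneg_of_nonneg_of_le_pi (by linarith [hx.1]) (by linarith [hx.2])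
  rw [sin_sub, cos_pi_div_four, sin_pi_div_four] at h
  nlinarith [sqrt_pos.2 (show (0:ℝ) < 2 by norm_num)]

theorem Real.sin_add_cos_sq (x : ℝ) : (sin x + cos x) ^ 2 = 1 + sin (2 * x) := by
  rw [sin_two_mul]; linear_combination sin_sq_add_cos_sq x

theorem stmt6_general (u v₁ w₁ v₂ w₂ : EuclideanSpace ℝ (Fin 2)) (φ : ℝ)
    (hv₁ : ‖v₁‖ = 1) (hw₁ : ‖w₁‖ = 1) (hv₂ : ‖v₂‖ = 1) (hw₂ : ‖w₂‖ = 1)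
    (hperp₁ : (inner ℝ v₁ w₁ : ℝ) = 0) (hperp₂ : (inner ℝ v₂ w₂ : ℝ) = 0)
    (hangle : InnerProductGeometry.angle v₁ v₂ = φ)
    (hφ : φ ∈ Set.Icc (Real.pi / 4) (Real.pi / 2)) :
    (inner ℝ u v₁ : ℝ) + (inner ℝ u w₁ : ℝ) + (inner ℝ u v₂ : ℝ) + |(inner ℝ u w₂ : ℝ)| ≤
      2 * (Real.sin (φ / 2) + Real.cos (φ / 2)) * ‖u‖ := by
  obtain ⟨hφ₁, hφ₂⟩ := hφ
  have hE : Module.finrank ℝ (EuclideanSpace ℝ (Fin 2)) = 2 := by simp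
  have h₁ := orthonormal_pair hv₁ hw₁ hperp₁
  have hcos : ⟪v₁, v₂⟫ = cos φ := by
    rw [← hangle, InnerProductGeometry.cos_angle, hv₁, hv₂, mul_one, div_one]
  have hcd : ⟪v₁, v₂⟫ ^ 2 + ⟪w₁, v₂⟫ ^ 2 = 1 := by
    rw [real_inner_comm v₂ v₁, real_inner_comm v₂ w₁, ← h₁.norm_sq_eq_of_finrank_eq_two hE, hv₂,
      one_pow]
  have hsin : ⟪w₁, v₂⟫ ≤ sin φ := by
    refine (abs_le_of_sq_le_sq' (le_of_eq ?_) ?_).2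
    · linear_combination hcd - hcos * (⟪v₁, v₂⟫ + cos φ) - sin_sq_add_cos_sq φ
    · exact sin_nonneg_of_nonneg_of_le_pi (by linarith [pi_pos]) (by linarith)
  have hK : 0 ≤ 2 * (sin (φ / 2) + cos (φ / 2)) := by
    have := sin_nonneg_of_nonneg_of_le_pi (x := φ / 2) (by linarith [pi_pos]) (by linarith)
    have := cos_nonneg_of_mem_Icc (x := φ / 2) ⟨by linarith [pi_pos], by linarith⟩
    positivity
  have hK2 : (2 * (sin (φ / 2) + cos (φ / 2))) ^ 2 = 4 * (1 + sin φ) := by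
    rw [mul_pow, sin_add_cos_sq, mul_div_cancel₀ φ two_ne_zero]
    norm_num
  rw [h₁.inner_eq_of_finrank_eq_two hE u v₂,
    abs_inner_eq_abs_of_orthonormal hE h₁ (orthonormal_pair hv₂ hw₂ hperp₂) u]
  refine taxicab_le (norm_nonneg u) (h₁.norm_sq_eq_of_finrank_eq_two hE u).symm hK hcd ?_ ?_
  · rw [hK2, hcos]
    linarith [cos_le_sin_of_mem_Icc ⟨hφ₁, by linarith [pi_pos]⟩]
  · rw [hK2]
    linarith

theorem stmt6 (u v₁ w₁ v₂ w₂ : EuclideanSpace ℝ (Fin 2)) (φ : ℝ)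
    (hu : u ≠ 0)
    (hv₁ : ‖v₁‖ = 1) (hw₁ : ‖w₁‖ = 1) (hv₂ : ‖v₂‖ = 1) (hw₂ : ‖w₂‖ = 1)
    (hperp₁ : (inner ℝ v₁ w₁ : ℝ) = 0) (hperp₂ : (inner ℝ v₂ w₂ : ℝ) = 0)
    (hangle : InnerProductGeometry.angle v₁ v₂ = φ)
    (hφ : φ ∈ Set.Icc (Real.pi / 4) (Real.pi / 2))
    (h1 : 0 ≤ (inner ℝ u v₁ : ℝ)) (h2 : 0 ≤ (inner ℝ u w₁ : ℝ))
    (h3 : 0 ≤ (inner ℝ u v₂ : ℝ)) :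
    (inner ℝ u v₁ : ℝ) + (inner ℝ u w₁ : ℝ) + (inner ℝ u v₂ : ℝ) + |(inner ℝ u w₂ : ℝ)| ≤
      2 * (Real.sin (φ / 2) + Real.cos (φ / 2)) * ‖u‖ :=
  stmt6_general u v₁ w₁ v₂ w₂ φ hv₁ hw₁ hv₂ hw₂ hperp₁ hperp₂ hangle hφ
end

section
/- For all φ with arccos(7/9) ≤ φ ≤ π/2, the quantity [max{2, 1 + 2cos φ}·(1 + sin φ) − 3] / [sin(max{φ, π/2 − φ}/2) + cos(max{φ, π/2 − φ}/2) − 1] is at least 2. -/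
private lemma auxA (c s x r2 : ℝ) (hr2 : r2 ^ 2 = 2) (hr2' : (1.4:ℝ) ≤ r2)
    (hc : r2/2 ≤ c) (hs : 4*r2/9 ≤ s) (hx : x ≤ 4/3) :
    2 * (x - 1) ≤ (1 + 2*c) * (1 + s) - 3 := by
  nlinarith [mul_nonneg (by linarith : (0:ℝ) ≤ c - r2/2) (by linarith : (0:ℝ) ≤ s - 4*r2/9)]

private lemma auxB1 (c s x r3 : ℝ) (hr3 : r3 ^ 2 = 3) (hr3nn : 0 ≤ r3)
    (hpyth : s ^ 2 + c ^ 2 = 1) (hc0 : 0 ≤ c) (hx1 : 1 ≤ x)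
    (hx2 : x ^ 2 = 1 + s) (hs3 : s ≤ r3/2) :
    2 * (x - 1) ≤ (1 + 2*c) * (1 + s) - 3 := by
  have hc2 : c ^ 2 = (2 - x ^ 2) * x ^ 2 := by
    linear_combination hpyth + (x ^ 2 - 1 + s) * hx2
  have hxub : x ≤ (1 + r3)/2 := by nlinarith
  have hf1 : 2*x^2 - 2*x - 1 ≤ 0 := by nlinarith
  have hf2 : 0 ≤ 2*x^6 + 2*x^5 - x^4 - 2*x - 1 := by
    nlinarith [mul_nonneg (by linarith : (0:ℝ) ≤ x - 1)
      (by nlinarith : (0:ℝ) ≤ 2*x^5 + 4*x^4 + 3*x^3 + 3*x^2 + 3*x + 1)]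
  have hp : (1 + 2*x - x^2)^2 ≤ 4 * x^6 * (2 - x^2) := by
    nlinarith [mul_nonneg (by linarith : (0:ℝ) ≤ -(2*x^2 - 2*x - 1)) hf2]
  have key : 1 + 2*x - x^2 ≤ 2 * c * x^2 := by
    rcases le_total (1 + 2*x - x^2) 0 with h | h
    · nlinarith [mul_nonneg hc0 (sq_nonneg x)]
    · nlinarith [hp, hc2, mul_nonneg hc0 (sq_nonneg x)]
  have hexp : (1 + 2*c) * (1 + s) - 3 = x^2 + 2*c*x^2 - 3 := by rw [← hx2]; ring
  linarith [key, hexp.ge, hexp.le, hx2]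

private lemma auxB2 (s x r3 : ℝ) (hr3 : r3 ^ 2 = 3) (hr3nn : 0 ≤ r3)
    (hx0 : 0 < x) (hx2 : x ^ 2 = 1 + s) (hs3 : r3/2 ≤ s) :
    2 * (x - 1) ≤ 2 * (1 + s) - 3 := by
  have hxlb : (1 + r3)/2 ≤ x := by nlinarith
  nlinarith [mul_nonneg (by linarith : (0:ℝ) ≤ x - (1+r3)/2)
    (by nlinarith : (0:ℝ) ≤ x - (1-r3)/2)]

set_option maxHeartbeats 2000000 in
theorem stmt7 (φ : ℝ) (h1 : Real.arccos (7/9) ≤ φ) (h2 : φ ≤ Real.pi / 2) :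
    (max 2 (1 + 2 * Real.cos φ) * (1 + Real.sin φ) - 3) /
      (Real.sin (max φ (Real.pi / 2 - φ) / 2) +
       Real.cos (max φ (Real.pi / 2 - φ) / 2) - 1) ≥ 2 := by
  have hπ := Real.pi_pos
  have harc0 : 0 ≤ Real.arccos (7/9) := Real.arccos_nonneg _
  have harc2 : Real.arccos (7/9) ≤ Real.pi / 2 := Real.arccos_le_pi_div_two.2 (by norm_num)
  have hφ0 : 0 ≤ φ := harc0.trans h1
  set ψ := max φ (Real.pi / 2 - φ) with hψdef
  clear_value ψ
  have hψ1 : Real.pi / 4 ≤ ψ := by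
    rw [hψdef]
    rcases le_total φ (Real.pi/4) with h | h
    · exact le_trans (by linarith) (le_max_right _ _)
    · exact le_trans h (le_max_left _ _)
  have hψ2 : ψ ≤ Real.pi / 2 := by
    rw [hψdef]; exact max_le h2 (by linarith)
  set x := Real.sin (ψ/2) + Real.cos (ψ/2) with hxdef
  clear_value x
  have hsin2 : Real.sin ψ = 2 * Real.sin (ψ/2) * Real.cos (ψ/2) := by
    have h : (2:ℝ) * (ψ/2) = ψ := by ring
    have h2m := Real.sin_two_mul (ψ/2)
    rw [h] at h2m; exact h2m
  have hpyth := Real.sin_sq_add_cos_sq (ψ/2)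
  have hx2 : x ^ 2 = 1 + Real.sin ψ := by
    rw [hsin2, hxdef]; linear_combination hpyth
  have hsψ : 0 < Real.sin ψ := Real.sin_pos_of_pos_of_lt_pi (by linarith) (by linarith)
  have hs2pos : 0 < Real.sin (ψ/2) :=
    Real.sin_pos_of_pos_of_lt_pi (by linarith) (by linarith)
  have hc2pos : 0 < Real.cos (ψ/2) :=
    Real.cos_pos_of_mem_Ioo ⟨by linarith, by linarith⟩
  have hx0 : 0 < x := by rw [hxdef]; positivity
  have hx1 : 1 < x := by nlinarith [hx2, hsψ, hx0]
  rw [ge_iff_le, le_div_iff₀ (by linarith : (0:ℝ) < x - 1)]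
  have hsφ0 : 0 ≤ Real.sin φ := Real.sin_nonneg_of_nonneg_of_le_pi hφ0 (by linarith)
  have hcφ0 : 0 ≤ Real.cos φ := Real.cos_nonneg_of_mem_Icc ⟨by linarith, h2⟩
  have hpythφ := Real.sin_sq_add_cos_sq φ
  set r2 := Real.sqrt 2 with hr2def
  clear_value r2
  have hr2 : r2 ^ 2 = 2 := by rw [hr2def]; exact Real.sq_sqrt (by norm_num)
  have hr2nn : 0 ≤ r2 := by rw [hr2def]; exact Real.sqrt_nonneg 2
  have hr2gt : (1.4:ℝ) ≤ r2 := by nlinarith [hr2, hr2nn]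
  set r3 := Real.sqrt 3 with hr3def
  clear_value r3
  have hr3 : r3 ^ 2 = 3 := by rw [hr3def]; exact Real.sq_sqrt (by norm_num)
  have hr3nn : 0 ≤ r3 := by rw [hr3def]; exact Real.sqrt_nonneg 3
  rcases le_total φ (Real.pi/4) with hA | hA
  · -- φ ≤ π/4 : ψ = π/2 - φ, sin ψ = cos φ
    have hψeq : ψ = Real.pi/2 - φ := by rw [hψdef]; exact max_eq_right (by linarith)
    have hsψc : Real.sin ψ = Real.cos φ := by rw [hψeq, Real.sin_pi_div_two_sub]
    rw [hsψc] at hx2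
    have hcφ4 : r2/2 ≤ Real.cos φ := by
      have h := Real.cos_le_cos_of_nonneg_of_le_pi hφ0 (by linarith) hA
      rwa [Real.cos_pi_div_four, ← hr2def] at h
    have hc79 : Real.cos φ ≤ 7/9 := by
      have h := Real.cos_le_cos_of_nonneg_of_le_pi harc0 (by linarith) h1
      rwa [Real.cos_arccos (by norm_num) (by norm_num)] at h
    have hsφlb : 4*r2/9 ≤ Real.sin φ := by
      have h := Real.sin_le_sin_of_le_of_le_pi_div_two (by linarith) h2 h1
      rw [Real.sin_arccos] at h
      have he : Real.sqrt (1 - (7/9 : ℝ) ^ 2) = 4*r2/9 := by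
        rw [show (1:ℝ) - (7/9)^2 = (4/9)^2 * 2 by norm_num,
          Real.sqrt_mul (by positivity), Real.sqrt_sq (by norm_num), ← hr2def]
        ring
      rwa [he] at h
    have hmax : max (2:ℝ) (1 + 2 * Real.cos φ) = 1 + 2 * Real.cos φ :=
      max_eq_right (by linarith)
    rw [hmax]
    have hxub : x ≤ 4/3 := by nlinarith [hx2, hc79, hx0]
    exact auxA _ _ _ _ hr2 hr2gt hcφ4 hsφlb hxub
  · -- φ ≥ π/4 : ψ = φ
    have hψeq : ψ = φ := by rw [hψdef]; exact max_eq_left (by linarith)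
    rw [hψeq] at hx2
    rcases le_total φ (Real.pi/3) with hB | hB
    · have hcφ3 : 1/2 ≤ Real.cos φ := by
        have h := Real.cos_le_cos_of_nonneg_of_le_pi hφ0 (by linarith) hB
        rwa [Real.cos_pi_div_three] at h
      have hsφ3 : Real.sin φ ≤ r3/2 := by
        have h := Real.sin_le_sin_of_le_of_le_pi_div_two (by linarith) (by linarith) hB
        rwa [Real.sin_pi_div_three, ← hr3def] at h
      have hmax : max (2:ℝ) (1 + 2 * Real.cos φ) = 1 + 2 * Real.cos φ :=
        max_eq_right (by linarith)
      rw [hmax]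
      exact auxB1 _ _ _ _ hr3 hr3nn hpythφ hcφ0 hx1.le hx2 hsφ3
    · have hcφ3 : Real.cos φ ≤ 1/2 := by
        have h := Real.cos_le_cos_of_nonneg_of_le_pi (by linarith) (by linarith) hB
        rwa [Real.cos_pi_div_three] at h
      have hsφ3 : r3/2 ≤ Real.sin φ := by
        have h := Real.sin_le_sin_of_le_of_le_pi_div_two (by linarith) h2 hB
        rwa [Real.sin_pi_div_three, ← hr3def] at h
      have hmax : max (2:ℝ) (1 + 2 * Real.cos φ) = 2 := max_eq_left (by linarith)
      rw [hmax]
      exact auxB2 _ _ _ hr3 hr3nn hx0 hx2 hsφ3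
end

section
/- Given positive real numbers A₀, A₁, A₂, there exists at most one triple (a, b, c) of nonnegative real numbers with a + b + c = 1 such that A₁ = (√3/4)(a² + 4ab + b²), A₂ = (√3/4)(b² + 4bc + c²), and A₀ = (√3/4)(c² + 4ca + a²). -/
lemma key8 (x y x' y' : ℝ) (hx : 0 ≤ x) (hy : 0 ≤ y) (hx' : 0 ≤ x') (hy' : 0 ≤ y')
    (h : x^2 + 4*x*y + y^2 = x'^2 + 4*x'*y' + y'^2) (hlt : x < x') : y' < y := by
  by_contra hcon
  push_neg at hcon
  nlinarith [mul_self_lt_mul_self hx hlt, mul_le_mul hlt.le hcon hy hx',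
    mul_self_le_mul_self hy hcon]

theorem stmt8 (A₀ A₁ A₂ : ℝ) (hA₀ : 0 < A₀) (hA₁ : 0 < A₁) (hA₂ : 0 < A₂)
    (a b c a' b' c' : ℝ)
    (ha : 0 ≤ a) (hb : 0 ≤ b) (hc : 0 ≤ c)
    (ha' : 0 ≤ a') (hb' : 0 ≤ b') (hc' : 0 ≤ c')
    (hsum : a + b + c = 1) (hsum' : a' + b' + c' = 1)
    (e1 : A₁ = Real.sqrt 3 / 4 * (a^2 + 4*a*b + b^2))
    (e2 : A₂ = Real.sqrt 3 / 4 * (b^2 + 4*b*c + c^2))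
    (e0 : A₀ = Real.sqrt 3 / 4 * (c^2 + 4*c*a + a^2))
    (e1' : A₁ = Real.sqrt 3 / 4 * (a'^2 + 4*a'*b' + b'^2))
    (e2' : A₂ = Real.sqrt 3 / 4 * (b'^2 + 4*b'*c' + c'^2))
    (e0' : A₀ = Real.sqrt 3 / 4 * (c'^2 + 4*c'*a' + a'^2)) :
    a = a' ∧ b = b' ∧ c = c' := by
  have hs : (0:ℝ) < Real.sqrt 3 / 4 := by positivity
  have h1 : a^2 + 4*a*b + b^2 = a'^2 + 4*a'*b' + b'^2 :=
    mul_left_cancel₀ hs.ne' (by linarith)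
  have h2 : b^2 + 4*b*c + c^2 = b'^2 + 4*b'*c' + c'^2 :=
    mul_left_cancel₀ hs.ne' (by linarith)
  have h0 : c^2 + 4*c*a + a^2 = c'^2 + 4*c'*a' + a'^2 :=
    mul_left_cancel₀ hs.ne' (by linarith)
  have haa : a = a' := by
    rcases lt_trichotomy a a' with h | h | h
    · have hbb : b' < b := key8 a b a' b' ha hb ha' hb' h1 h
      have hcc : c < c' := key8 b' c' b c hb' hc' hb hc h2.symm hbb
      have : a' < a := key8 c a c' a' hc ha hc' ha' h0 hcc
      linarith
    · exact h
    · have hbb : b < b' := key8 a' b' a b ha' hb' ha hb h1.symm h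
      have hcc : c' < c := key8 b c b' c' hb hc hb' hc' h2 hbb
      have : a < a' := key8 c' a' c a hc' ha' hc ha h0.symm hcc
      linarith
  have hbb : b = b' := by
    subst haa
    have hz : (b - b') * (4*a + b + b') = 0 := by linear_combination h1
    rcases mul_eq_zero.mp hz with h' | h'
    · linarith
    · linarith
  exact ⟨haa, hbb, by linarith⟩
end

section
/- Let A be the total area and let a₁, …, aₙ (n ≥ 3) be positive reals with Σ aᵢ = A and aᵢ ≤ A/3 for all i, and let p₁, …, pₙ satisfy pᵢ ≥ √(8√3)·√(aᵢ) for each i. If A ≥ √3/2, then (1/2)·Σ pᵢ ≥ 3, with equality only if n = 3, A = √3/2, and each aᵢ = A/3. -/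
theorem stmt15 (n : ℕ) (hn : 3 ≤ n) (A : ℝ) (hA : Real.sqrt 3 / 2 ≤ A)
    (a p : Fin n → ℝ)
    (hapos : ∀ i, 0 < a i) (hsum : ∑ i, a i = A)
    (hbound : ∀ i, a i ≤ A / 3)
    (hp : ∀ i, p i ≥ Real.sqrt (8 * Real.sqrt 3) * Real.sqrt (a i)) :
    (1 / 2) * ∑ i, p i ≥ 3 ∧
      ((1 / 2) * ∑ i, p i = 3 →
        n = 3 ∧ A = Real.sqrt 3 / 2 ∧ ∀ i, a i = A / 3) := by
  have h3 : (0:ℝ) < Real.sqrt 3 := Real.sqrt_pos.mpr (by norm_num)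
  have h3sq : Real.sqrt 3 ^ 2 = 3 := Real.sq_sqrt (by norm_num)
  have hApos : 0 < A := lt_of_lt_of_le (by positivity) hA
  set c := Real.sqrt (8 * Real.sqrt 3) with hc
  have hcpos : 0 < c := Real.sqrt_pos.mpr (by positivity)
  set s := Real.sqrt (A / 3) with hs
  have hspos : 0 < s := Real.sqrt_pos.mpr (by positivity)
  have hs2 : s ^ 2 = A / 3 := Real.sq_sqrt (by positivity)
  have key : ∀ i, a i ≤ Real.sqrt (a i) * s := by
    intro i
    have h1 : Real.sqrt (a i) ≤ s := Real.sqrt_le_sqrt (hbound i)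
    calc a i = Real.sqrt (a i) * Real.sqrt (a i) := (Real.mul_self_sqrt (hapos i).le).symm
      _ ≤ Real.sqrt (a i) * s := mul_le_mul_of_nonneg_left h1 (Real.sqrt_nonneg _)
  have hsumsqrt : 3 * s ≤ ∑ i, Real.sqrt (a i) := by
    have h : A ≤ (∑ i, Real.sqrt (a i)) * s := by
      rw [← hsum, Finset.sum_mul]
      exact Finset.sum_le_sum fun i _ => key i
    nlinarith
  have hcs_eq : c * s = Real.sqrt (8 * Real.sqrt 3 * (A / 3)) := by
    rw [hc, hs, ← Real.sqrt_mul (by positivity)]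
  have hcs : 2 ≤ c * s := by
    rw [hcs_eq]
    have h4 : (4:ℝ) ≤ 8 * Real.sqrt 3 * (A / 3) := by nlinarith
    calc (2:ℝ) = Real.sqrt 4 := by
          rw [show (4:ℝ) = 2^2 by norm_num, Real.sqrt_sq (by norm_num)]
      _ ≤ _ := Real.sqrt_le_sqrt h4
  have hpsum : c * ∑ i, Real.sqrt (a i) ≤ ∑ i, p i := by
    rw [Finset.mul_sum]
    exact Finset.sum_le_sum fun i _ => hp i
  have hmain : (1 / 2) * ∑ i, p i ≥ 3 := by nlinarith
  refine ⟨hmain, fun heq => ?_⟩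
  have ha : ∀ i, a i = A / 3 := by
    intro j
    by_contra hj
    have hjlt : a j < A / 3 := lt_of_le_of_ne (hbound j) hj
    have hstrict : a j < Real.sqrt (a j) * s := by
      have h1 : Real.sqrt (a j) < s := Real.sqrt_lt_sqrt (hapos j).le hjlt
      have h2 : 0 < Real.sqrt (a j) := Real.sqrt_pos.mpr (hapos j)
      calc a j = Real.sqrt (a j) * Real.sqrt (a j) := (Real.mul_self_sqrt (hapos j).le).symm
        _ < Real.sqrt (a j) * s := by exact mul_lt_mul_of_pos_left h1 h2
    have h : A < (∑ i, Real.sqrt (a i)) * s := by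
      rw [← hsum, Finset.sum_mul]
      exact Finset.sum_lt_sum (fun i _ => key i) ⟨j, Finset.mem_univ j, hstrict⟩
    have hsumsqrt' : 3 * s < ∑ i, Real.sqrt (a i) := by nlinarith
    nlinarith
  have hAeq : A = Real.sqrt 3 / 2 := by
    by_contra hA'
    have hAgt : Real.sqrt 3 / 2 < A := lt_of_le_of_ne hA (Ne.symm hA')
    have h4 : (4:ℝ) < 8 * Real.sqrt 3 * (A / 3) := by nlinarith
    have hcs' : 2 < c * s := by
      rw [hcs_eq]
      calc (2:ℝ) = Real.sqrt 4 := by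
            rw [show (4:ℝ) = 2^2 by norm_num, Real.sqrt_sq (by norm_num)]
        _ < _ := (Real.sqrt_lt_sqrt (by norm_num) h4)
    nlinarith
  have hn3 : n = 3 := by
    have hns : (∑ i, a i) = (n : ℝ) * (A / 3) := by
      rw [Finset.sum_congr rfl fun i _ => ha i, Finset.sum_const, Finset.card_univ,
        Fintype.card_fin, nsmul_eq_mul]
    rw [hsum] at hns
    have h5 : (n : ℝ) * A = 3 * A := by linarith
    have : (n : ℝ) = 3 := mul_right_cancel₀ (ne_of_gt hApos) h5
    exact_mod_cast this
  exact ⟨hn3, hAeq, ha⟩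
end

section
/- For a standard double bubble in the plane parameterized by the angle θ ∈ (0, π/3) between the interior arc and its chord, the ratio of perimeter to diameter equals f(θ) = (8π sin θ cos θ + 3√3 θ)/(6 sin θ cos θ + 3 sin θ), and f(θ) > π for all θ ∈ (0, π/3). -/
open Real

/-!
Writing `s = sin θ`, `c = cos θ`, one has `2 sin (2π/3 ± θ) = √3 c ∓ s`, so the product of these
two sines is `(4c² - 1)/4`. With this the diameter collapses to `√3 C / (2c - 1)`, the two outer
arcs to `4C (2π√3 c/3 + θ s) / (4c² - 1)`, and `P / D = f(θ)` is an identity of rational functions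
modulo `s² + c² = 1`.

Clearing the positive denominator, `f(θ) > π` becomes `g(θ) > 0` for
`g(θ) = π sin 2θ + 3√3 θ - 3π sin θ`. Now `g(0) = g(π/3) = 0` and
`g''(θ) = π sin θ (3 - 8 cos θ) < 0` on `(0, π/3)` since `cos θ > 1/2`, so `g` is strictly
concave there and hence positive in between.
-/

/-- Length of a circular arc subtended by a chord of length `C` that it meets
at angle `θ`. -/
noncomputable def arcLen (θ C : ℝ) : ℝ := C * θ / Real.sin θ

lemma StrictConcaveOn.pos_of_mem_Ioo {g : ℝ → ℝ} {a b x : ℝ}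
    (hg : StrictConcaveOn ℝ (Set.Icc a b) g) (ha : 0 ≤ g a) (hb : 0 ≤ g b)
    (hx : x ∈ Set.Ioo a b) : 0 < g x := by
  have hab : a < b := hx.1.trans hx.2
  calc 0 ≤ min (g a) (g b) := le_min ha hb
    _ < g x := hg.lt_on_openSegment (Set.left_mem_Icc.2 hab.le) (Set.right_mem_Icc.2 hab.le)
      hab.ne (by rwa [openSegment_eq_Ioo hab])

lemma sin_two_pi_div_three_add (θ : ℝ) : sin (2 * π / 3 + θ) = (√3 * cos θ - sin θ) / 2 := by
  rw [sin_add, show 2 * π / 3 = π - π / 3 by ring, sin_pi_sub, cos_pi_sub, sin_pi_div_three,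
    cos_pi_div_three]
  ring

lemma sin_two_pi_div_three_sub (θ : ℝ) : sin (2 * π / 3 - θ) = (√3 * cos θ + sin θ) / 2 := by
  rw [sin_sub, show 2 * π / 3 = π - π / 3 by ring, sin_pi_sub, cos_pi_sub, sin_pi_div_three,
    cos_pi_div_three]
  ring

lemma four_mul_sin_two_pi_div_three_add_mul_sub (θ : ℝ) :
    4 * sin (2 * π / 3 + θ) * sin (2 * π / 3 - θ) = (2 * cos θ - 1) * (2 * cos θ + 1) := by
  rw [sin_two_pi_div_three_add, sin_two_pi_div_three_sub]
  linear_combination cos θ ^ 2 * sq_sqrt (show (0 : ℝ) ≤ 3 by norm_num) - sin_sq_add_cos_sq θ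

lemma two_mul_cos_sub_one_ne_zero_and_add_one_ne_zero {θ : ℝ}
    (hA : sin (2 * π / 3 + θ) ≠ 0) (hB : sin (2 * π / 3 - θ) ≠ 0) :
    2 * cos θ - 1 ≠ 0 ∧ 2 * cos θ + 1 ≠ 0 :=
  mul_ne_zero_iff.1 <| four_mul_sin_two_pi_div_three_add_mul_sub θ ▸
    mul_ne_zero (mul_ne_zero four_ne_zero hA) hB

lemma diameter_eq (θ C : ℝ) (hA : sin (2 * π / 3 + θ) ≠ 0) (hB : sin (2 * π / 3 - θ) ≠ 0) :
    C * ((1 + cos (π / 3 - θ)) / (2 * sin (2 * π / 3 + θ)) +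
      (1 + cos (π / 3 + θ)) / (2 * sin (2 * π / 3 - θ))) = C * √3 / (2 * cos θ - 1) := by
  have hc := (two_mul_cos_sub_one_ne_zero_and_add_one_ne_zero hA hB).1
  have hprod := four_mul_sin_two_pi_div_three_add_mul_sub θ
  have eA := sin_two_pi_div_three_add θ
  have eB := sin_two_pi_div_three_sub θ
  rw [cos_sub, cos_add, cos_pi_div_three, sin_pi_div_three]
  -- opaque sines keep `field_simp` from normalising `2 * π / 3 ± θ` inside them
  generalize sin (2 * π / 3 + θ) = A at *
  generalize sin (2 * π / 3 - θ) = B at *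
  field_simp
  linear_combination C * (2 * cos θ - 1) * ((2 + cos θ + √3 * sin θ) * eB +
    (2 + cos θ - √3 * sin θ) * eA + √3 * sin_sq_add_cos_sq θ) - C * √3 * hprod

lemma arcLen_add_arcLen (θ C : ℝ) (hA : sin (2 * π / 3 + θ) ≠ 0)
    (hB : sin (2 * π / 3 - θ) ≠ 0) :
    arcLen (2 * π / 3 + θ) C + arcLen (2 * π / 3 - θ) C =
      4 * C * (2 * π / 3 * √3 * cos θ + θ * sin θ) / ((2 * cos θ - 1) * (2 * cos θ + 1)) := by
  have eA := sin_two_pi_div_three_add θ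
  have eB := sin_two_pi_div_three_sub θ
  rw [← four_mul_sin_two_pi_div_three_add_mul_sub, arcLen, arcLen]
  generalize sin (2 * π / 3 + θ) = A at *
  generalize sin (2 * π / 3 - θ) = B at *
  field_simp
  linear_combination C * ((2 * π + 3 * θ) * eB + (2 * π - 3 * θ) * eA)

lemma perimeter_div_diameter (θ C : ℝ) (hC : C ≠ 0) (hs : sin θ ≠ 0) (h₁ : 2 * cos θ - 1 ≠ 0)
    (h₂ : 2 * cos θ + 1 ≠ 0) :
    (4 * C * (2 * π / 3 * √3 * cos θ + θ * sin θ) / ((2 * cos θ - 1) * (2 * cos θ + 1)) +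
      C * θ / sin θ) / (C * √3 / (2 * cos θ - 1)) =
      (8 * π * sin θ * cos θ + 3 * √3 * θ) / (6 * sin θ * cos θ + 3 * sin θ) := by
  rw [show 6 * sin θ * cos θ + 3 * sin θ = 3 * sin θ * (2 * cos θ + 1) by ring]
  field_simp
  linear_combination 12 * θ * sin_sq_add_cos_sq θ -
    3 * θ * sq_sqrt (show (0 : ℝ) ≤ 3 by norm_num)

/-- `(f(θ) - π) (6 sin θ cos θ + 3 sin θ)`, where `f` is the perimeter-to-diameter ratio. -/
noncomputable def ratioExcess (θ : ℝ) : ℝ := π * sin (2 * θ) + 3 * √3 * θ - 3 * π * sin θ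

lemma hasDerivAt_ratioExcess (x : ℝ) :
    HasDerivAt ratioExcess (2 * π * cos (2 * x) + 3 * √3 - 3 * π * cos x) x :=
  (((((hasDerivAt_id x).const_mul 2).sin.const_mul π).add
    ((hasDerivAt_id x).const_mul (3 * √3))).sub
      ((hasDerivAt_sin x).const_mul (3 * π))).congr_deriv (by simp only [id, mul_one]; ring)

lemma deriv_ratioExcess :
    deriv ratioExcess = fun x ↦ 2 * π * cos (2 * x) + 3 * √3 - 3 * π * cos x :=
  funext fun x ↦ (hasDerivAt_ratioExcess x).deriv

lemma iterate_deriv_two_ratioExcess (x : ℝ) :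
    deriv^[2] ratioExcess x = π * sin x * (3 - 8 * cos x) := by
  rw [Function.iterate_succ_apply, Function.iterate_one, deriv_ratioExcess]
  refine ((((((hasDerivAt_id x).const_mul 2).cos.const_mul (2 * π)).add_const (3 * √3)).sub
    ((hasDerivAt_cos x).const_mul (3 * π))).congr_deriv ?_).deriv
  simp only [id, mul_one]
  rw [sin_two_mul]
  ring

lemma strictConcaveOn_ratioExcess : StrictConcaveOn ℝ (Set.Icc 0 (π / 3)) ratioExcess := by
  refine strictConcaveOn_of_deriv2_neg (convex_Icc _ _)
    (continuous_iff_continuousAt.2 fun x ↦ (hasDerivAt_ratioExcess x).continuousAt).continuousOn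
    fun x hx ↦ ?_
  rw [interior_Icc] at hx
  have hsin : 0 < sin x := sin_pos_of_pos_of_lt_pi hx.1 (by linarith [hx.2, pi_pos])
  have hcos : 1 / 2 < cos x := cos_pi_div_three ▸
    cos_lt_cos_of_nonneg_of_le_pi hx.1.le (by linarith [pi_pos]) hx.2
  rw [iterate_deriv_two_ratioExcess]
  exact mul_neg_of_pos_of_neg (by positivity) (by linarith)

lemma ratioExcess_pos {θ : ℝ} (hθ : θ ∈ Set.Ioo 0 (π / 3)) : 0 < ratioExcess θ := by
  have h₀ : ratioExcess 0 = 0 := by simp [ratioExcess]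
  have h₁ : ratioExcess (π / 3) = 0 := by
    rw [ratioExcess, show 2 * (π / 3) = π - π / 3 by ring, sin_pi_sub, sin_pi_div_three]
    ring
  exact strictConcaveOn_ratioExcess.pos_of_mem_Ioo h₀.ge h₁.ge hθ

lemma pi_lt_perimeter_div_diameter {θ : ℝ} (hθ : θ ∈ Set.Ioo 0 (π / 3)) :
    π < (8 * π * sin θ * cos θ + 3 * √3 * θ) / (6 * sin θ * cos θ + 3 * sin θ) := by
  have hsin : 0 < sin θ := sin_pos_of_pos_of_lt_pi hθ.1 (by linarith [hθ.2, pi_pos])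
  have hcos : 0 < cos θ :=
    cos_pos_of_mem_Ioo ⟨by linarith [hθ.1, pi_pos], by linarith [hθ.2, pi_pos]⟩
  have hg := ratioExcess_pos hθ
  rw [ratioExcess, sin_two_mul] at hg
  rw [lt_div_iff₀ (by positivity)]
  linarith

theorem stmt16 (θ C P D f : ℝ) (hθ : θ ∈ Set.Ioo 0 (π / 3)) (hC : 0 < C)
    (hP : P = arcLen (2 * π / 3 + θ) C + arcLen (2 * π / 3 - θ) C + arcLen θ C)
    (hD : D = C * ((1 + Real.cos (π / 3 - θ)) / (2 * Real.sin (2 * π / 3 + θ)) +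
                   (1 + Real.cos (π / 3 + θ)) / (2 * Real.sin (2 * π / 3 - θ))))
    (hf : f = (8 * π * Real.sin θ * Real.cos θ + 3 * Real.sqrt 3 * θ) /
              (6 * Real.sin θ * Real.cos θ + 3 * Real.sin θ)) :
    P / D = f ∧ f > π := by
  obtain ⟨hθ₀, hθ₁⟩ := hθ
  have hs : sin θ ≠ 0 := (sin_pos_of_pos_of_lt_pi hθ₀ (by linarith [pi_pos])).ne'
  have hA : sin (2 * π / 3 + θ) ≠ 0 :=
    (sin_pos_of_pos_of_lt_pi (by linarith [pi_pos]) (by linarith)).ne'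
  have hB : sin (2 * π / 3 - θ) ≠ 0 :=
    (sin_pos_of_pos_of_lt_pi (by linarith [pi_pos]) (by linarith)).ne'
  obtain ⟨h₁, h₂⟩ := two_mul_cos_sub_one_ne_zero_and_add_one_ne_zero hA hB
  refine ⟨?_, hf ▸ pi_lt_perimeter_div_diameter ⟨hθ₀, hθ₁⟩⟩
  rw [hP, hD, hf, diameter_eq θ C hA hB, arcLen_add_arcLen θ C hA hB, arcLen]
  exact perimeter_div_diameter θ C hC.ne' hs h₁ h₂
end
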